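/- arXiv:math/0410017 — 3 statements merged into one kernel-verified Lean document; each statement's English description precedes it below -/
import Mathlib

section
/- Let d ≥ 2 and n be positive integers with d dividing n. For j, u ∈ Z_n define σ_u(j) = d + j − ⟨2j+u−1⟩ with ⟨x⟩ ∈ {1,...,d} the representative of x mod d. If 2j + u − 1 ≢ 0 (mod d), then σ_u(σ_u(j)) = j + d in Z_n; consequently the orbit of j under σ_u has exactly 2n/d elements. -/
/-- The representative of `x` modulo `d` lying in `{1, ..., d}`. -/
def hatRep (d : ℕ) (x : ZMod d) : ℕ := if x = 0 then d else x.val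

/-- The permutation `σ_u(j) = d + j − ⟨2j+u−1⟩` of `ℤ/n` (where `d ∣ n`). -/
def sigmaPerm (n d : ℕ) (hdn : d ∣ n) (u j : ZMod n) : ZMod n :=
  (d : ZMod n) + j - (hatRep d (ZMod.castHom hdn (ZMod d) (2 * j + u - 1)) : ZMod n)


lemma hatRep_cast {d : ℕ} [NeZero d] (x : ZMod d) : ((hatRep d x : ℕ) : ZMod d) = x := by
  by_cases hx : x = 0 <;> simp [hatRep, hx, ZMod.natCast_val, ZMod.cast_id]

lemma sigma_add {n d : ℕ} (hdn : d ∣ n) (u j c : ZMod n)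
    (hc : ZMod.castHom hdn (ZMod d) c = 0) :
    sigmaPerm n d hdn u (j + c) = sigmaPerm n d hdn u j + c := by
  have harg : ZMod.castHom hdn (ZMod d) (2 * (j + c) + u - 1)
      = ZMod.castHom hdn (ZMod d) (2 * j + u - 1) := by
    simp only [map_sub, map_add, map_mul, map_one, map_ofNat, hc]
    ring
  unfold sigmaPerm
  rw [harg]; ring

lemma cast_sigma {n d : ℕ} [NeZero d] (hdn : d ∣ n) (u j : ZMod n) :
    ZMod.castHom hdn (ZMod d) (2 * sigmaPerm n d hdn u j + u - 1)
      = - ZMod.castHom hdn (ZMod d) (2 * j + u - 1) := by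
  unfold sigmaPerm
  generalize hH : hatRep d (ZMod.castHom hdn (ZMod d) (2 * j + u - 1)) = H
  have hHd : ((H : ℕ) : ZMod d) = ZMod.castHom hdn (ZMod d) (2 * j + u - 1) := by
    rw [← hH, hatRep_cast]
  simp only [map_sub, map_add, map_mul, map_one, map_ofNat, map_natCast] at hHd ⊢
  rw [hHd]
  simp only [map_sub, map_add, map_mul, map_one, map_ofNat, ZMod.natCast_self]
  ring

lemma sigma_sigma {n d : ℕ} [NeZero d] (hdn : d ∣ n) (u j : ZMod n)
    (h : ZMod.castHom hdn (ZMod d) (2 * j + u - 1) ≠ 0) :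
    sigmaPerm n d hdn u (sigmaPerm n d hdn u j) = j + (d : ZMod n) := by
  set x := ZMod.castHom hdn (ZMod d) (2 * j + u - 1) with hx
  have hvle : x.val ≤ d := le_of_lt (ZMod.val_lt x)
  have hneg : hatRep d (ZMod.castHom hdn (ZMod d) (2 * sigmaPerm n d hdn u j + u - 1))
      = d - x.val := by
    rw [cast_sigma hdn u j, ← hx, hatRep, if_neg (neg_ne_zero.mpr h), ZMod.neg_val, if_neg h]
  have hσ : sigmaPerm n d hdn u j = (d : ZMod n) + j - (x.val : ZMod n) := by
    unfold sigmaPerm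
    rw [← hx, hatRep, if_neg h]
  show (d : ZMod n) + sigmaPerm n d hdn u j
      - (hatRep d (ZMod.castHom hdn (ZMod d) (2 * sigmaPerm n d hdn u j + u - 1)) : ZMod n)
      = j + (d : ZMod n)
  rw [hneg, Nat.cast_sub hvle, hσ]
  ring

/-- If `2j + u − 1 ≢ 0 (mod d)`, then `σ_u(σ_u(j)) = j + d` in `ℤ/n`;
consequently the orbit of `j` under `σ_u` has exactly `2n/d` elements. -/
theorem stmt2 (d n : ℕ) (hd : 2 ≤ d) (hn : 0 < n) (hdn : d ∣ n) (u j : ZMod n)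
    (h : ZMod.castHom hdn (ZMod d) (2 * j + u - 1) ≠ 0) :
    sigmaPerm n d hdn u (sigmaPerm n d hdn u j) = j + (d : ZMod n) ∧
      (Set.range fun t : ℕ => (sigmaPerm n d hdn u)^[t] j).ncard = 2 * n / d := by
  haveI : NeZero d := ⟨by omega⟩
  haveI : NeZero n := ⟨hn.ne'⟩
  set σ := sigmaPerm n d hdn u with hσdef
  have part1 : σ (σ j) = j + (d : ZMod n) := sigma_sigma hdn u j h
  refine ⟨part1, ?_⟩
  set m := n / d with hm
  have hmd : m * d = n := Nat.div_mul_cancel hdn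
  have hm0 : 0 < m := by
    rcases Nat.eq_zero_or_pos m with h0 | h0
    · exfalso; rw [h0, zero_mul] at hmd; omega
    · exact h0
  have hadd : ∀ (y c : ZMod n), ZMod.castHom hdn (ZMod d) c = 0 → σ (y + c) = σ y + c :=
    fun y c hc => sigma_add hdn u y c hc
  have hcast0 : ∀ s : ℕ, ZMod.castHom hdn (ZMod d) ((s * d : ℕ) : ZMod n) = 0 := by
    intro s
    rw [map_natCast]
    push_cast
    simp
  have heven : ∀ s : ℕ, σ^[2 * s] j = j + ((s * d : ℕ) : ZMod n) := by
    intro s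
    induction s with
    | zero => simp
    | succ s ih =>
      have h2 : 2 * (s + 1) = 2 + 2 * s := by ring
      rw [h2, Function.iterate_add_apply]
      show σ (σ (σ^[2 * s] j)) = _
      rw [ih, hadd j _ (hcast0 s), hadd (σ j) _ (hcast0 s), part1]
      push_cast
      ring
  have hodd : ∀ s : ℕ, σ^[2 * s + 1] j = σ j + ((s * d : ℕ) : ZMod n) := by
    intro s
    rw [show 2 * s + 1 = 1 + 2 * s by ring, Function.iterate_add_apply, heven s,
      Function.iterate_one, hadd j _ (hcast0 s)]
  have hperiod : ∀ t : ℕ, σ^[t] j = σ^[t % (2 * m)] j := by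
    intro t
    have hj : σ^[2 * m * (t / (2 * m))] j = j := by
      have h1 := heven (m * (t / (2 * m)))
      have h2 : ((m * (t / (2 * m)) * d : ℕ) : ZMod n) = 0 := by
        have h3 : m * (t / (2 * m)) * d = n * (t / (2 * m)) := by rw [← hmd]; ring
        rw [h3]; push_cast; simp
      rw [h2, add_zero] at h1
      rw [← h1]; congr 1; ring
    calc σ^[t] j = σ^[t % (2 * m) + 2 * m * (t / (2 * m))] j := by rw [Nat.mod_add_div]
      _ = σ^[t % (2 * m)] (σ^[2 * m * (t / (2 * m))] j) := Function.iterate_add_apply _ _ _ _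
      _ = σ^[t % (2 * m)] j := by rw [hj]
  have hinj : ∀ s s' : ℕ, s < m → s' < m →
      ((s * d : ℕ) : ZMod n) = ((s' * d : ℕ) : ZMod n) → s = s' := by
    intro s s' hs hs' he
    have h1 : s * d < n := by rw [← hmd]; exact (Nat.mul_lt_mul_right (show 0 < d by omega)).mpr hs
    have h2 : s' * d < n := by rw [← hmd]; exact (Nat.mul_lt_mul_right (show 0 < d by omega)).mpr hs'
    have := congrArg ZMod.val he
    rw [ZMod.val_cast_of_lt h1, ZMod.val_cast_of_lt h2] at this
    exact Nat.eq_of_mul_eq_mul_right (by omega) this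
  have hcs : ZMod.castHom hdn (ZMod d) (σ j)
      = ZMod.castHom hdn (ZMod d) j - ZMod.castHom hdn (ZMod d) (2 * j + u - 1) := by
    show ZMod.castHom hdn (ZMod d) (sigmaPerm n d hdn u j) = _
    unfold sigmaPerm
    rw [map_sub, map_add, map_natCast, map_natCast, hatRep_cast, ZMod.natCast_self]
    ring
  have hsep : ∀ s s' : ℕ, j + ((s * d : ℕ) : ZMod n) ≠ σ j + ((s' * d : ℕ) : ZMod n) := by
    intro s s' he
    apply h
    have := congrArg (ZMod.castHom hdn (ZMod d)) he
    rw [map_add, map_add, hcast0 s, hcast0 s', add_zero, add_zero, hcs] at this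
    linear_combination this
  have hkey : ∀ a b : ℕ, σ^[a] j = σ^[b] j → a < 2 * m → b < 2 * m → a = b := by
    intro a b hab ha hb
    rcases Nat.even_or_odd a with ⟨s, hs⟩ | ⟨s, hs⟩ <;>
      rcases Nat.even_or_odd b with ⟨s', hs'⟩ | ⟨s', hs'⟩
    · have hs2 : a = 2 * s := by omega
      have hs2' : b = 2 * s' := by omega
      rw [hs2, hs2', heven s, heven s'] at hab
      have := hinj s s' (by omega) (by omega) (by exact add_left_cancel hab)
      omega
    · have hs2 : a = 2 * s := by omega
      rw [hs2, hs', heven s, hodd s'] at hab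
      exact absurd hab (hsep s s')
    · have hs2' : b = 2 * s' := by omega
      rw [hs, hs2', hodd s, heven s'] at hab
      exact absurd hab.symm (hsep s' s)
    · rw [hs, hs', hodd s, hodd s'] at hab
      have := hinj s s' (by omega) (by omega) (by exact add_left_cancel hab)
      omega
  have hrange : (Set.range fun t : ℕ => σ^[t] j)
      = ↑((Finset.range (2 * m)).image (fun t => σ^[t] j)) := by
    ext y
    simp only [Set.mem_range, Finset.coe_image, Set.mem_image, Finset.mem_coe,
      Finset.mem_range]
    constructor
    · rintro ⟨t, rfl⟩
      exact ⟨t % (2 * m), Nat.mod_lt t (by omega), (hperiod t).symm⟩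
    · rintro ⟨t, _, rfl⟩
      exact ⟨t, rfl⟩
  rw [hrange, Set.ncard_coe_finset, Finset.card_image_of_injOn, Finset.card_range,
    Nat.mul_div_assoc 2 hdn]
  intro a ha b hb hab
  exact hkey a b hab (Finset.mem_range.mp ha) (Finset.mem_range.mp hb)
end

section
/- Let k be a field, q ∈ k a primitive d-th root of unity (d ≥ 2), and n a positive integer with char k ∤ n and q^n = 1. Let A be the k-algebra with generators G, X and relations G^n = 1, X^d = 0, GX = q^{-1}XG (the extended Taft algebra). Then A has dimension nd over k, with basis {G^i X^j : 0 ≤ i ≤ n−1, 0 ≤ j ≤ d−1}. -/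
/-- The defining relations of the extended Taft algebra
`⟨G, X ∣ Gⁿ = 1, X^d = 0, GX = q⁻¹XG⟩`: the generator `true` plays the role of `G`
and `false` plays the role of `X`. -/
inductive TaftRel (k : Type*) [Field k] (q : k) (n d : ℕ) :
    FreeAlgebra k Bool → FreeAlgebra k Bool → Prop
  | gpow : TaftRel k q n d ((FreeAlgebra.ι k true) ^ n) 1
  | xpow : TaftRel k q n d ((FreeAlgebra.ι k false) ^ d) 0
  | comm : TaftRel k q n d (FreeAlgebra.ι k true * FreeAlgebra.ι k false)
      (q⁻¹ • (FreeAlgebra.ι k false * FreeAlgebra.ι k true))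

/-- The extended Taft algebra, as the quotient of the free algebra on `G, X` by the
two-sided ideal generated by `Gⁿ − 1`, `X^d`, `GX − q⁻¹XG`. -/
abbrev TaftAlg (k : Type*) [Field k] (q : k) (n d : ℕ) := RingQuot (TaftRel k q n d)

/-- The image of the generator `G` in the extended Taft algebra. -/
noncomputable def taftG (k : Type*) [Field k] (q : k) (n d : ℕ) : TaftAlg k q n d :=
  RingQuot.mkAlgHom k (TaftRel k q n d) (FreeAlgebra.ι k true)

/-- The image of the generator `X` in the extended Taft algebra. -/
noncomputable def taftX (k : Type*) [Field k] (q : k) (n d : ℕ) : TaftAlg k q n d :=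
  RingQuot.mkAlgHom k (TaftRel k q n d) (FreeAlgebra.ι k false)

/-! The relation `XG = q GX` lets every word in `G, X` be rewritten as a scalar multiple of some
`Gⁱ Xʲ`, and `Gⁿ = 1`, `X^d = 0` cut the exponents down to `i < n`, `j < d`; so these `nd`
monomials span. For independence, let `G` and `X` act on the space with basis `e_{ij}`
(`i ∈ ℤ/n`, `j < d`) by `G e_{ij} = e_{i+1,j}` and `X e_{ij} = qⁱ e_{i,j+1}` (and `0` once
`j + 1 = d`). This is a representation of the algebra because `qⁿ = 1`, and in it
`Gⁱ Xʲ e_{00} = e_{ij}`. -/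

theorem pow_val_add_one_of_pow_eq_one {M : Type*} [Monoid M] {q : M} {n : ℕ} [NeZero n]
    (hq : q ^ n = 1) (i : Fin n) : q ^ ((i + 1 : Fin n) : ℕ) = q * q ^ (i : ℕ) := by
  rw [Fin.val_add, ← pow_eq_pow_mod _ hq, pow_add, Fin.val_one', ← pow_eq_pow_mod _ hq, pow_one,
    ← (Commute.self_pow q _).eq]

def reducedMonomial {M : Type*} [Monoid M] (n d : ℕ) (g x : M) (p : Fin n × Fin d) : M :=
  g ^ (p.1 : ℕ) * x ^ (p.2 : ℕ)

section QCommuting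

variable {k A : Type*} [CommSemiring k] [Semiring A] [Algebra k A] {g x : A} {c : k}

theorem pow_mul_pow_eq_smul_of_mul_eq_smul (h : x * g = c • (g * x)) (i j : ℕ) :
    x ^ j * g ^ i = c ^ (i * j) • (g ^ i * x ^ j) := by
  have hx : ∀ i : ℕ, x * g ^ i = c ^ i • (g ^ i * x) := by
    intro i
    induction i with
    | zero => simp
    | succ i ih =>
      rw [pow_succ, ← mul_assoc, ih, smul_mul_assoc, mul_assoc, h, mul_smul_comm, smul_smul,
        ← mul_assoc, ← pow_succ, ← pow_succ]
  induction j with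
  | zero => simp
  | succ j ih =>
    rw [pow_succ, mul_assoc, hx, mul_smul_comm, ← mul_assoc, ih, smul_mul_assoc, smul_smul,
      mul_assoc, ← pow_succ, ← pow_add, Nat.mul_succ, add_comm]

variable {n d : ℕ}

theorem pow_mul_pow_mem_span_reducedMonomial (hn : 0 < n) (hg : g ^ n = 1) (hx : x ^ d = 0)
    (i j : ℕ) : g ^ i * x ^ j ∈ Submodule.span k (Set.range (reducedMonomial n d g x)) := by
  rcases lt_or_ge j d with hj | hj
  · rw [pow_eq_pow_mod i hg]
    exact Submodule.subset_span ⟨(⟨i % n, Nat.mod_lt i hn⟩, ⟨j, hj⟩), rfl⟩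
  · rw [← Nat.add_sub_cancel' hj, pow_add, hx, zero_mul, mul_zero]
    exact Submodule.zero_mem _

theorem reducedMonomial_mul_mem_span (hn : 0 < n) (hg : g ^ n = 1) (hx : x ^ d = 0)
    (h : x * g = c • (g * x)) (p p' : Fin n × Fin d) :
    reducedMonomial n d g x p * reducedMonomial n d g x p' ∈
      Submodule.span k (Set.range (reducedMonomial n d g x)) := by
  have hmul : reducedMonomial n d g x p * reducedMonomial n d g x p' =
      c ^ ((p'.1 : ℕ) * p.2) • (g ^ ((p.1 : ℕ) + p'.1) * x ^ ((p.2 : ℕ) + p'.2)) := by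
    simp only [reducedMonomial, pow_add, mul_assoc, ← smul_mul_assoc]
    rw [← mul_assoc (x ^ _), pow_mul_pow_eq_smul_of_mul_eq_smul h]
    simp only [smul_mul_assoc, mul_smul_comm, mul_assoc]
  rw [hmul]
  exact Submodule.smul_mem _ _ (pow_mul_pow_mem_span_reducedMonomial hn hg hx _ _)

theorem adjoin_le_span_reducedMonomial (hn : 0 < n) (hg : g ^ n = 1) (hx : x ^ d = 0)
    (h : x * g = c • (g * x)) :
    Subalgebra.toSubmodule (Algebra.adjoin k {g, x}) ≤
      Submodule.span k (Set.range (reducedMonomial n d g x)) := by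
  set S := Submodule.span k (Set.range (reducedMonomial n d g x))
  have hmem := pow_mul_pow_mem_span_reducedMonomial (k := k) hn hg hx
  have hmulS : S * S ≤ S := by
    rw [Submodule.span_mul_span, Submodule.span_le]
    rintro _ ⟨_, ⟨p, rfl⟩, _, ⟨p', rfl⟩, rfl⟩
    exact reducedMonomial_mul_mem_span hn hg hx h p p'
  let T : Subalgebra k A := S.toSubalgebra (by simpa using hmem 0 0)
    fun _ _ ha hb => hmulS (Submodule.mul_mem_mul ha hb)
  have hgS : g ∈ S := by simpa using hmem 1 0
  have hxS : x ∈ S := by simpa using hmem 0 1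
  exact Algebra.adjoin_le (S := T) (Set.insert_subset hgS (Set.singleton_subset_iff.2 hxS))

end QCommuting

namespace TaftModel

open Fin.NatCast Finsupp

variable {k : Type*} [CommSemiring k] (q : k) (n d : ℕ)

noncomputable def opX : (Fin n × Fin d →₀ k) →ₗ[k] (Fin n × Fin d →₀ k) :=
  linearCombination k fun p =>
    if h : (p.2 : ℕ) + 1 < d then single (p.1, ⟨p.2 + 1, h⟩) (q ^ (p.1 : ℕ)) else 0

variable {q n d}

theorem opX_single (p : Fin n × Fin d) (c : k) :
    opX q n d (single p c) =
      if h : (p.2 : ℕ) + 1 < d then single (p.1, ⟨p.2 + 1, h⟩) (q ^ (p.1 : ℕ) * c) else 0 := by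
  rw [opX, linearCombination_single]
  split_ifs <;> simp [mul_comm]

theorem opX_pow_single (m : ℕ) (p : Fin n × Fin d) (c : k) :
    (opX q n d ^ m) (single p c) =
      if h : (p.2 : ℕ) + m < d then single (p.1, ⟨p.2 + m, h⟩) (q ^ ((p.1 : ℕ) * m) * c)
      else 0 := by
  induction m generalizing p c with
  | zero => simp
  | succ m ih =>
    rw [pow_succ, Module.End.mul_apply, opX_single]
    split_ifs with h1 h2 h2
    · rw [ih, dif_pos (by dsimp only; omega)]
      congr 1
      · ext <;> dsimp only; omega
      · ring
    · rw [ih, dif_neg (by dsimp only; omega)]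
    · omega
    · exact map_zero _

theorem opX_pow_self : opX q n d ^ d = 0 :=
  lhom_ext fun p c => by simp [opX_pow_single]

variable (n d) [NeZero n]

noncomputable def opG : (Fin n × Fin d →₀ k) →ₗ[k] (Fin n × Fin d →₀ k) :=
  linearCombination k fun p => single (p.1 + 1, p.2) 1

variable {n d}

theorem opG_single (p : Fin n × Fin d) (c : k) :
    opG n d (single p c) = single (p.1 + 1, p.2) c := by
  simp [opG]

theorem opG_pow_single (m : ℕ) (p : Fin n × Fin d) (c : k) :
    (opG n d ^ m) (single p c) = single (p.1 + m, p.2) c := by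
  induction m generalizing p with
  | zero => simp
  | succ m ih =>
    rw [pow_succ, Module.End.mul_apply, opG_single, ih, Nat.cast_succ, add_assoc, add_comm 1]

theorem opG_pow_self : opG (k := k) n d ^ n = 1 :=
  lhom_ext fun p c => by simp [opG_pow_single]

theorem opX_mul_opG (hq : q ^ n = 1) : opX q n d * opG n d = q • (opG n d * opX q n d) :=
  lhom_ext fun p c => by
    simp only [Module.End.mul_apply, LinearMap.smul_apply, opG_single, opX_single,
      pow_val_add_one_of_pow_eq_one hq]
    split_ifs
    · rw [opG_single, smul_single, smul_eq_mul, mul_assoc]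
    · rw [map_zero, smul_zero]

theorem opG_pow_opX_pow_single_zero (hd : 0 < d) (p : Fin n × Fin d) :
    (opG n d ^ (p.1 : ℕ)) ((opX q n d ^ (p.2 : ℕ)) (single (0, ⟨0, hd⟩) 1)) = single p 1 := by
  rw [opX_pow_single, dif_pos (by simp), opG_pow_single]
  simp

end TaftModel

namespace TaftAlg

variable {k : Type*} [Field k] {q : k} {n d : ℕ}

theorem taftG_pow : taftG k q n d ^ n = 1 := by
  simpa [taftG] using RingQuot.mkAlgHom_rel k (TaftRel.gpow (k := k) (q := q) (n := n) (d := d))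

theorem taftX_pow : taftX k q n d ^ d = 0 := by
  simpa [taftX] using RingQuot.mkAlgHom_rel k (TaftRel.xpow (k := k) (q := q) (n := n) (d := d))

theorem taftX_mul_taftG (hq : q ≠ 0) :
    taftX k q n d * taftG k q n d = q • (taftG k q n d * taftX k q n d) := by
  have h := RingQuot.mkAlgHom_rel k (TaftRel.comm (k := k) (q := q) (n := n) (d := d))
  rw [map_mul, map_smul, map_mul] at h
  rw [taftG, taftX, h, smul_smul, mul_inv_cancel₀ hq, one_smul]

theorem adjoin_taftG_taftX : Algebra.adjoin k {taftG k q n d, taftX k q n d} = ⊤ := by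
  have hrange : Set.range (RingQuot.mkAlgHom k (TaftRel k q n d) ∘ FreeAlgebra.ι k) =
      {taftG k q n d, taftX k q n d} := by
    ext
    simp [taftG, taftX, or_comm]
  rw [← hrange, Set.range_comp, Algebra.adjoin_image, FreeAlgebra.adjoin_range_ι, Algebra.map_top,
    AlgHom.range_eq_top]
  exact RingQuot.mkAlgHom_surjective k _

variable {A : Type*} [Semiring A] [Algebra k A] (g x : A)

noncomputable def lift (hg : g ^ n = 1) (hx : x ^ d = 0) (hgx : g * x = q⁻¹ • (x * g)) :
    TaftAlg k q n d →ₐ[k] A :=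
  RingQuot.liftAlgHom k ⟨FreeAlgebra.lift k (fun b => bif b then g else x), by
    rintro _ _ ⟨⟩ <;> simp [hg, hx, hgx]⟩

variable {g x} (hg : g ^ n = 1) (hx : x ^ d = 0) (hgx : g * x = q⁻¹ • (x * g))

@[simp] theorem lift_taftG : lift g x hg hx hgx (taftG k q n d) = g := by
  simp [lift, taftG]

@[simp] theorem lift_taftX : lift g x hg hx hgx (taftX k q n d) = x := by
  simp [lift, taftX]

theorem span_reducedMonomial_eq_top (hn : 0 < n) (hq : q ≠ 0) :
    Submodule.span k (Set.range (reducedMonomial n d (taftG k q n d) (taftX k q n d))) = ⊤ := by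
  rw [eq_top_iff, ← Algebra.top_toSubmodule, ← adjoin_taftG_taftX]
  exact adjoin_le_span_reducedMonomial hn taftG_pow taftX_pow (taftX_mul_taftG hq)

theorem linearIndependent_reducedMonomial [NeZero n] (hq : q ^ n = 1) :
    LinearIndependent k (reducedMonomial n d (taftG k q n d) (taftX k q n d)) := by
  rcases d.eq_zero_or_pos with rfl | hd
  · exact linearIndependent_empty_type
  have hq0 : q ≠ 0 := (IsUnit.of_pow_eq_one hq (NeZero.ne n)).ne_zero
  have hGX : TaftModel.opG n d * TaftModel.opX q n d =
      q⁻¹ • (TaftModel.opX q n d * TaftModel.opG n d) := by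
    rw [TaftModel.opX_mul_opG hq, smul_smul, inv_mul_cancel₀ hq0, one_smul]
  let φ := lift (k := k) _ _ TaftModel.opG_pow_self TaftModel.opX_pow_self hGX
  refine LinearIndependent.of_comp
    (LinearMap.applyₗ (Finsupp.single (0, ⟨0, hd⟩) 1) ∘ₗ φ.toLinearMap) ?_
  convert Finsupp.linearIndependent_single_one k (Fin n × Fin d) with p
  simp [reducedMonomial, φ, TaftModel.opG_pow_opX_pow_single_zero]

end TaftAlg

theorem stmt4_general {k : Type*} [Field k] (q : k) (n d : ℕ)
    (hn : 0 < n) (hqn : q ^ n = 1) :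
    Module.finrank k (TaftAlg k q n d) = n * d ∧
    ∃ b : Module.Basis (Fin n × Fin d) k (TaftAlg k q n d),
      ∀ p : Fin n × Fin d, b p = taftG k q n d ^ (p.1 : ℕ) * taftX k q n d ^ (p.2 : ℕ) := by
  have : NeZero n := ⟨hn.ne'⟩
  have hq0 : q ≠ 0 := (IsUnit.of_pow_eq_one hqn hn.ne').ne_zero
  let b : Module.Basis (Fin n × Fin d) k (TaftAlg k q n d) :=
    .mk (TaftAlg.linearIndependent_reducedMonomial hqn)
      (TaftAlg.span_reducedMonomial_eq_top hn hq0).ge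
  refine ⟨?_, b, Module.Basis.mk_apply _ _⟩
  rw [Module.finrank_eq_card_basis b, Fintype.card_prod, Fintype.card_fin, Fintype.card_fin]

/-- The extended Taft algebra has dimension `nd` over `k`, with basis
`{Gⁱ Xʲ : 0 ≤ i ≤ n−1, 0 ≤ j ≤ d−1}`. -/
theorem stmt4 {k : Type*} [Field k] (q : k) (n d : ℕ) (hd : 2 ≤ d)
    (hq : IsPrimitiveRoot q d) (hn : 0 < n) (hchar : ¬ ringChar k ∣ n) (hqn : q ^ n = 1) :
    Module.finrank k (TaftAlg k q n d) = n * d ∧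
    ∃ b : Module.Basis (Fin n × Fin d) k (TaftAlg k q n d),
      ∀ p : Fin n × Fin d, b p = taftG k q n d ^ (p.1 : ℕ) * taftX k q n d ^ (p.2 : ℕ) :=
  stmt4_general q n d hn hqn
end

section
/- Let A be a finite-dimensional self-injective algebra over a field k, M a finite-dimensional A-module with no nonzero projective direct summands, and 0 → ΩM → P → M → 0 a projective cover of M. If top(P) ≅ soc(P) (e.g., A is symmetric), then soc(ΩM) ≅ top(M). -/
/-- The socle of a module: the sum of all its simple submodules. -/
def moduleSocle (A : Type*) [Ring A] (M : Type*) [AddCommGroup M] [Module A M] :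
    Submodule A M :=
  sSup {N : Submodule A M | IsSimpleModule A N}

/-!
Since `ker f ⊆ J·P`, the map `f` induces `top P ≅ top M`, so it suffices to show that every
simple submodule `S` of `P` lies in `ker f`; then `soc (ker f) = soc P ≅ top P ≅ top M`.
Otherwise `f` is injective on `S`. Over a self-injective ring the finitely generated projective
module `P` is injective, so the inverse `f(S) → S` extends to `g : M → P`. The Fitting
decomposition of `g ∘ f` splits off a summand `I ⊇ S` of `P` on which `f` is injective, and then
`f(I) ≅ I` is injective and projective, hence a nonzero projective direct summand of `M`.
-/

open LinearMap Submodule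

def HasNoProjectiveSummand (R M : Type*) [Ring R] [AddCommGroup M] [Module R M] : Prop :=
  ∀ N₁ N₂ : Submodule R M, IsCompl N₁ N₂ → Module.Projective R N₁ → N₁ = ⊥

section

variable {R P M : Type*} [Ring R] [AddCommGroup P] [Module R P] [AddCommGroup M] [Module R M]

namespace Module.Baer

theorem of_retract (i : M →ₗ[R] P) (r : P →ₗ[R] M) (hri : r ∘ₗ i = LinearMap.id)
    (hP : Module.Baer R P) : Module.Baer R M := fun I g ↦
  have ⟨g', hg'⟩ := hP I (i ∘ₗ g)
  ⟨r ∘ₗ g', fun x hx ↦ by simp [hg' x hx, ← LinearMap.comp_apply r i, hri]⟩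

theorem of_isCompl (hP : Module.Baer R P) {p q : Submodule R P} (h : IsCompl p q) :
    Module.Baer R p :=
  of_retract p.subtype (p.projectionOnto q h) (projectionOnto_comp_subtype h) hP

theorem of_projective [Module.Finite R P] [Module.Projective R P] (hR : Module.Baer R R) :
    Module.Baer R P := by
  obtain ⟨n, π, hπ⟩ := Module.Finite.exists_fin' R P
  obtain ⟨s, hs⟩ := π.exists_rightInverse_of_surjective (range_eq_top.mpr hπ)
  have : Module.Injective R R := hR.injective
  exact of_retract s π hs (.of_injective (Module.Injective.pi R fun _ : Fin n ↦ R))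

theorem exists_isCompl {N : Submodule R M} (hN : Module.Baer R N) : ∃ N', IsCompl N N' :=
  have ⟨r, hr⟩ := hN.extension_property N.subtype N.injective_subtype LinearMap.id
  ⟨_, isCompl_of_proj (f := r) fun x ↦ LinearMap.congr_fun hr x⟩

end Module.Baer

theorem Module.Projective.of_isCompl [Module.Projective R P] {p q : Submodule R P}
    (h : IsCompl p q) : Module.Projective R p :=
  .of_split p.subtype (p.projectionOnto q h) (projectionOnto_comp_subtype h)

theorem LinearMap.injective_domRestrict_of_disjoint_ker (f : P →ₗ[R] M) {S : Submodule R P}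
    (hS : Disjoint S (ker f)) : Function.Injective (f.domRestrict S) := by
  rwa [← ker_eq_bot, ker_domRestrict, ← disjoint_iff_comap_eq_bot]

noncomputable def Submodule.equivMapOfDisjointKer (f : P →ₗ[R] M) {S : Submodule R P}
    (hS : Disjoint S (ker f)) : S ≃ₗ[R] S.map f :=
  LinearEquiv.ofInjective _ (f.injective_domRestrict_of_disjoint_ker hS) ≪≫ₗ
    LinearEquiv.ofEq _ _ (range_domRestrict S f)

@[simp]
theorem Submodule.equivMapOfDisjointKer_apply (f : P →ₗ[R] M) {S : Submodule R P}
    (hS : Disjoint S (ker f)) (x : S) : (S.equivMapOfDisjointKer f hS x : M) = f x :=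
  rfl

theorem exists_comp_apply_eq_of_disjoint_ker (hP : Module.Baer R P) (f : P →ₗ[R] M)
    {S : Submodule R P} (hS : Disjoint S (ker f)) : ∃ g : M →ₗ[R] P, ∀ x ∈ S, g (f x) = x := by
  let e := S.equivMapOfDisjointKer f hS
  obtain ⟨g, hg⟩ := hP.extension_property (S.map f).subtype (injective_subtype _)
    (S.subtype ∘ₗ e.symm.toLinearMap)
  refine ⟨g, fun x hx ↦ ?_⟩
  simpa [e] using LinearMap.congr_fun hg (e ⟨x, hx⟩)

theorem HasNoProjectiveSummand.eq_bot_of_disjoint_ker_of_baer (hM : HasNoProjectiveSummand R M)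
    (f : P →ₗ[R] M) {I : Submodule R P} [Module.Projective R I] (hI : Module.Baer R I)
    (hdisj : Disjoint I (ker f)) : I = ⊥ := by
  let e := I.equivMapOfDisjointKer f hdisj
  have : Module.Projective R (I.map f) := .of_equiv e
  obtain ⟨N', hN'⟩ := (hI.of_equiv e).exists_isCompl
  have hfI : I ≤ ker f := map_le_iff_le_comap.mp (hM _ N' hN' this).le
  exact hdisj.eq_bot_of_le hfI

theorem HasNoProjectiveSummand.eq_bot_of_disjoint_ker [IsArtinian R P] [IsNoetherian R P]
    [Module.Projective R P] (hP : Module.Baer R P) (hM : HasNoProjectiveSummand R M)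
    (f : P →ₗ[R] M) {S : Submodule R P} (hS : Disjoint S (ker f)) : S = ⊥ := by
  obtain ⟨g, hg⟩ := exists_comp_apply_eq_of_disjoint_ker hP f hS
  have hfitting := (g ∘ₗ f).isCompl_iSup_ker_pow_iInf_range_pow
  have hSI : S ≤ ⨅ n, range ((g ∘ₗ f) ^ n) := fun x hx ↦ mem_iInf _ |>.mpr fun n ↦
    ⟨x, by rw [Module.End.pow_apply]; exact Function.iterate_fixed (hg x hx) n⟩
  have hker : ker f ≤ ⨆ n, ker ((g ∘ₗ f) ^ n) :=
    le_iSup_of_le 1 (by rw [pow_one]; exact ker_le_ker_comp f g)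
  have : Module.Projective R _ := .of_isCompl hfitting.symm
  exact eq_bot_mono hSI <| hM.eq_bot_of_disjoint_ker_of_baer f (hP.of_isCompl hfitting.symm)
    (hfitting.disjoint.symm.mono_right hker)

theorem HasNoProjectiveSummand.le_ker_of_isSimpleModule [IsArtinian R P] [IsNoetherian R P]
    [Module.Projective R P] (hP : Module.Baer R P) (hM : HasNoProjectiveSummand R M)
    (f : P →ₗ[R] M) (S : Submodule R P) [IsSimpleModule R S] : S ≤ ker f := by
  by_contra hSf
  exact (IsSimpleModule.isAtom (m := S)).1 <|
    hM.eq_bot_of_disjoint_ker hP f ((IsSimpleModule.isAtom).not_le_iff_disjoint.mp hSf)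

theorem map_subtype_moduleSocle {K : Submodule R P}
    (hK : ∀ S : Submodule R P, IsSimpleModule R S → S ≤ K) :
    (moduleSocle R K).map K.subtype = moduleSocle R P := by
  have hsimple : map K.subtype '' {T : Submodule R K | IsSimpleModule R T} =
      {S : Submodule R P | IsSimpleModule R S} := by
    ext S
    constructor
    · rintro ⟨T, hT, rfl⟩
      have : IsSimpleModule R T := hT
      exact IsSimpleModule.congr (T.equivMapOfInjective _ K.injective_subtype).symm
    · intro hS
      have hmap : (S.comap K.subtype).map K.subtype = S := by
        rw [map_comap_subtype, inf_eq_right.mpr (hK S hS)]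
      refine ⟨S.comap K.subtype, ?_, hmap⟩
      have : IsSimpleModule R S := hS
      exact IsSimpleModule.congr
        ((S.comap K.subtype).equivMapOfInjective _ K.injective_subtype ≪≫ₗ .ofEq _ _ hmap)
  rw [moduleSocle, moduleSocle, ← hsimple, (gc_map_comap K.subtype).l_sSup, sSup_image]

noncomputable def moduleSocleEquivOfSimpleLE {K : Submodule R P}
    (hK : ∀ S : Submodule R P, IsSimpleModule R S → S ≤ K) :
    moduleSocle R K ≃ₗ[R] moduleSocle R P :=
  (moduleSocle R K).equivMapOfInjective _ K.injective_subtype ≪≫ₗ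
    .ofEq _ _ (map_subtype_moduleSocle hK)

theorem ker_mkQ_comp_eq_smul_top (I : Ideal R) {f : P →ₗ[R] M} (hf : Function.Surjective f)
    (hker : ker f ≤ I • ⊤) : ker ((I • ⊤ : Submodule R M).mkQ ∘ₗ f) = I • ⊤ := by
  have hmap : (I • ⊤ : Submodule R P).map f = I • ⊤ := by
    rw [map_smul'', Submodule.map_top, range_eq_top.mpr hf]
  rw [ker_comp, ker_mkQ, ← hmap, comap_map_eq, sup_eq_left.mpr hker]

noncomputable def quotSmulTopEquivOfKerLE (I : Ideal R) {f : P →ₗ[R] M}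
    (hf : Function.Surjective f) (hker : ker f ≤ I • ⊤) :
    (P ⧸ (I • ⊤ : Submodule R P)) ≃ₗ[R] (M ⧸ (I • ⊤ : Submodule R M)) :=
  quotEquivOfEq _ _ (ker_mkQ_comp_eq_smul_top I hf hker).symm ≪≫ₗ
    quotKerEquivOfSurjective _ ((mkQ_surjective _).comp hf)

end

theorem stmt10_general {k A M P : Type*} [Field k] [Ring A] [Algebra k A]
    [AddCommGroup M] [Module A M]
    [AddCommGroup P] [Module k P] [Module A P] [IsScalarTower k A P] [FiniteDimensional k P]
    (hselfinj : Module.Injective A A)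
    (hM : ∀ N₁ N₂ : Submodule A M, IsCompl N₁ N₂ → Module.Projective A N₁ → N₁ = ⊥)
    (hP : Module.Projective A P)
    (f : P →ₗ[A] M) (hf : Function.Surjective f)
    (hcover : LinearMap.ker f ≤ (⊥ : Ideal A).jacobson • (⊤ : Submodule A P))
    (htopsoc :
      Nonempty ((P ⧸ ((⊥ : Ideal A).jacobson • (⊤ : Submodule A P))) ≃ₗ[A] moduleSocle A P)) :
    Nonempty ((moduleSocle A (LinearMap.ker f)) ≃ₗ[A]
      (M ⧸ ((⊥ : Ideal A).jacobson • (⊤ : Submodule A M)))) := by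
  have : Module.Finite A P := .of_restrictScalars_finite k A P
  have : IsArtinian A P := isArtinian_of_tower k inferInstance
  have : IsNoetherian A P := isNoetherian_of_tower k inferInstance
  have hPBaer : Module.Baer A P := .of_projective (.of_injective hselfinj)
  have hsoc := moduleSocleEquivOfSimpleLE fun S _ ↦
    HasNoProjectiveSummand.le_ker_of_isSimpleModule hPBaer hM f S
  exact ⟨hsoc ≪≫ₗ htopsoc.some.symm ≪≫ₗ quotSmulTopEquivOfKerLE _ hf hcover⟩

/-- Let `A` be a finite-dimensional self-injective algebra over a field
`k`, `M` a finite-dimensional `A`-module with no nonzero projective direct summands, and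
`0 → ΩM → P → M → 0` a projective cover. If `top(P) ≅ soc(P)` (e.g. `A` symmetric), then
`soc(ΩM) ≅ top(M)`. Here `ΩM = ker f`, `top(N) = N / J(A)·N`. -/
theorem stmt10 {k A M P : Type*} [Field k] [Ring A] [Algebra k A] [FiniteDimensional k A]
    [AddCommGroup M] [Module k M] [Module A M] [IsScalarTower k A M] [FiniteDimensional k M]
    [AddCommGroup P] [Module k P] [Module A P] [IsScalarTower k A P] [FiniteDimensional k P]
    (hselfinj : Module.Injective A A)
    (hM : ∀ N₁ N₂ : Submodule A M, IsCompl N₁ N₂ → Module.Projective A N₁ → N₁ = ⊥)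
    (hP : Module.Projective A P)
    (f : P →ₗ[A] M) (hf : Function.Surjective f)
    (hcover : LinearMap.ker f ≤ (⊥ : Ideal A).jacobson • (⊤ : Submodule A P))
    (htopsoc :
      Nonempty ((P ⧸ ((⊥ : Ideal A).jacobson • (⊤ : Submodule A P))) ≃ₗ[A] moduleSocle A P)) :
    Nonempty ((moduleSocle A (LinearMap.ker f)) ≃ₗ[A]
      (M ⧸ ((⊥ : Ideal A).jacobson • (⊤ : Submodule A M)))) :=
  stmt10_general (k := k) hselfinj hM hP f hf hcover htopsoc
end
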